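/- arXiv:2303.08699 — 2 statements merged into one kernel-verified Lean document; each statement's English description precedes it below -/
import Mathlib

section
/- Every singular value of the correlation matrix W (W_{jk} = Tr[ρ σ_j⊗σ_k]) of a two-qubit density matrix ρ is at most 1. -/
/-!
For unit vectors `u, v ∈ ℝ³` the bilinear form `uᵀ W v` equals `Re Tr[ρ M]` with
`M = (u·σ) ⊗ (v·σ)`. Since `(u·σ)² = |u|² = 1`, `M` is a Hermitian involution, so
`1 - M = (1 - M)ᴴ (1 - M) / 2` is positive semidefinite and `Re Tr[ρ M] ≤ Tr ρ = 1`.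
A singular value `s > 0` is attained as `uᵀ W v` for a unit right singular vector `v` and
`u = W v / s`.
-/

noncomputable section
open Matrix Kronecker
open scoped ComplexOrder

/-- The Pauli matrices σ₁, σ₂, σ₃. -/
def σp : Fin 3 → Matrix (Fin 2) (Fin 2) ℂ :=
  ![!![0, 1; 1, 0], !![0, -Complex.I; Complex.I, 0], !![1, 0; 0, -1]]

/-- Correlation matrix W_{jk} = Tr[ρ (σ_j ⊗ σ_k)] (real part; W is in fact real). -/
def corr (ρ : Matrix (Fin 2 × Fin 2) (Fin 2 × Fin 2) ℂ) : Matrix (Fin 3) (Fin 3) ℝ :=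
  Matrix.of fun j k => ((ρ * (σp j ⊗ₖ σp k)).trace).re

/-- `s` is a singular value of W iff s ≥ 0 and s² is an eigenvalue of WᵀW. -/
def IsSingularValue (W : Matrix (Fin 3) (Fin 3) ℝ) (s : ℝ) : Prop :=
  0 ≤ s ∧ (Wᵀ * W - s ^ 2 • (1 : Matrix (Fin 3) (Fin 3) ℝ)).det = 0

theorem Matrix.exists_ne_zero_mulVec_dotProduct_mulVec_eq {m n : Type*} [Fintype m]
    [Fintype n] [DecidableEq n] (W : Matrix m n ℝ) {s : ℝ}
    (hdet : (Wᵀ * W - s ^ 2 • (1 : Matrix n n ℝ)).det = 0) :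
    ∃ v ≠ 0, (W *ᵥ v) ⬝ᵥ (W *ᵥ v) = s ^ 2 * (v ⬝ᵥ v) := by
  obtain ⟨v, hv0, hv⟩ := exists_mulVec_eq_zero_iff.mpr hdet
  rw [sub_mulVec, sub_eq_zero, smul_mulVec, one_mulVec] at hv
  refine ⟨v, hv0, ?_⟩
  calc (W *ᵥ v) ⬝ᵥ (W *ᵥ v) = v ⬝ᵥ (Wᵀ * W) *ᵥ v := by
        rw [← mulVec_mulVec, dotProduct_mulVec v, vecMul_transpose]
    _ = s ^ 2 * (v ⬝ᵥ v) := by rw [hv, dotProduct_smul, smul_eq_mul]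

theorem Matrix.exists_unit_dotProduct_mulVec_eq {m n : Type*} [Fintype m] [Fintype n]
    [DecidableEq n] (W : Matrix m n ℝ) {s : ℝ} (hs : 0 < s)
    (hdet : (Wᵀ * W - s ^ 2 • (1 : Matrix n n ℝ)).det = 0) :
    ∃ u v, u ⬝ᵥ u = 1 ∧ v ⬝ᵥ v = 1 ∧ u ⬝ᵥ W *ᵥ v = s := by
  obtain ⟨v, hv0, hWv⟩ := W.exists_ne_zero_mulVec_dotProduct_mulVec_eq hdet
  have hvv : 0 < v ⬝ᵥ v := by simpa using dotProduct_self_star_pos_iff.mpr hv0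
  set t := √(v ⬝ᵥ v)
  have ht : 0 < t := Real.sqrt_pos.mpr hvv
  have ht2 : t ^ 2 = v ⬝ᵥ v := Real.sq_sqrt hvv.le
  refine ⟨(s * t)⁻¹ • (W *ᵥ v), t⁻¹ • v, ?_, ?_, ?_⟩ <;>
    simp only [mulVec_smul, smul_dotProduct, dotProduct_smul, smul_eq_mul, hWv, ← ht2] <;>
    field_simp

theorem Matrix.PosSemidef.trace_mul_conjTranspose_mul_self_nonneg {n R : Type*} [Fintype n]
    [CommRing R] [PartialOrder R] [StarRing R] [StarOrderedRing R] {ρ : Matrix n n R}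
    (hρ : ρ.PosSemidef) (B : Matrix n n R) : 0 ≤ (ρ * (Bᴴ * B)).trace := by
  rw [← mul_assoc, trace_mul_cycle]
  exact (hρ.mul_mul_conjTranspose_same B).trace_nonneg

theorem Matrix.PosSemidef.re_trace_mul_le_of_mul_self_eq_one {n : Type*} [Fintype n]
    [DecidableEq n] {ρ M : Matrix n n ℂ} (hρ : ρ.PosSemidef) (hM : M.IsHermitian)
    (hM2 : M * M = 1) : (ρ * M).trace.re ≤ ρ.trace.re := by
  have hsq : (1 - M)ᴴ * (1 - M) = (2 : ℂ) • (1 - M) := by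
    simp only [conjTranspose_sub, conjTranspose_one, hM.eq, sub_mul, mul_sub, hM2, one_mul,
      mul_one]
    module
  have h := hρ.trace_mul_conjTranspose_mul_self_nonneg (1 - M)
  rw [hsq, Matrix.mul_smul, trace_smul, mul_sub, mul_one, trace_sub, smul_eq_mul] at h
  simpa using (Complex.nonneg_iff.mp h).1

def pauliVec (u : Fin 3 → ℝ) : Matrix (Fin 2) (Fin 2) ℂ :=
  ∑ j, (u j : ℂ) • σp j

theorem pauliVec_isHermitian (u : Fin 3 → ℝ) : (pauliVec u).IsHermitian := by
  ext i j
  fin_cases i <;> fin_cases j <;>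
    simp [pauliVec, σp, Fin.sum_univ_three, conjTranspose_apply]

theorem pauliVec_mul_self (u : Fin 3 → ℝ) :
    pauliVec u * pauliVec u = ((u ⬝ᵥ u : ℝ) : ℂ) • 1 := by
  ext i j
  fin_cases i <;> fin_cases j <;>
    simp [pauliVec, σp, dotProduct, Fin.sum_univ_three, mul_apply, Complex.ext_iff] <;> grind

theorem dotProduct_corr_mulVec (ρ : Matrix (Fin 2 × Fin 2) (Fin 2 × Fin 2) ℂ)
    (u v : Fin 3 → ℝ) :
    u ⬝ᵥ corr ρ *ᵥ v = (ρ * (pauliVec u ⊗ₖ pauliVec v)).trace.re := by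
  have hsplit : pauliVec u ⊗ₖ pauliVec v =
      ∑ j, ∑ k, ((u j * v k : ℝ) : ℂ) • (σp j ⊗ₖ σp k) := by
    simp only [pauliVec, Fin.sum_univ_three, add_kronecker, kronecker_add, smul_kronecker,
      kronecker_smul, Complex.ofReal_mul]
    module
  simp only [hsplit, Finset.mul_sum, Matrix.mul_smul, trace_sum, trace_smul, Complex.re_sum,
    smul_eq_mul, Complex.re_ofReal_mul, corr, dotProduct, mulVec, of_apply]
  exact Fintype.sum_congr _ _ fun j => Fintype.sum_congr _ _ fun k => by ring

theorem dotProduct_corr_mulVec_le_re_trace {ρ : Matrix (Fin 2 × Fin 2) (Fin 2 × Fin 2) ℂ}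
    (hρ : ρ.PosSemidef) {u v : Fin 3 → ℝ} (hu : u ⬝ᵥ u = 1) (hv : v ⬝ᵥ v = 1) :
    u ⬝ᵥ corr ρ *ᵥ v ≤ ρ.trace.re := by
  rw [dotProduct_corr_mulVec]
  refine hρ.re_trace_mul_le_of_mul_self_eq_one ?_ ?_
  · rw [IsHermitian, conjTranspose_kronecker, (pauliVec_isHermitian u).eq,
      (pauliVec_isHermitian v).eq]
  · rw [← mul_kronecker_mul, pauliVec_mul_self, pauliVec_mul_self, hu, hv]
    simp

/-- Every singular value of the correlation matrix of a two-qubit density matrix is ≤ 1. -/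
theorem singular_values_of_corr_le_one (ρ : Matrix (Fin 2 × Fin 2) (Fin 2 × Fin 2) ℂ)
    (hpsd : ρ.PosSemidef) (htr : ρ.trace = 1) :
    ∀ s : ℝ, IsSingularValue (corr ρ) s → s ≤ 1 := by
  rintro s ⟨hs0, hdet⟩
  rcases hs0.eq_or_lt with rfl | hs
  · exact zero_le_one
  obtain ⟨u, v, hu, hv, huv⟩ := (corr ρ).exists_unit_dotProduct_mulVec_eq hs hdet
  simpa [huv, htr] using dotProduct_corr_mulVec_le_re_trace hpsd hu hv
end
end

section
/- Let ρ = χ(x₁,x₂,x₃,x₄) be an X-state and F_ε = ε|0⟩⟨0| + |1⟩⟨1|. The filtered (unnormalized) state (F_ε⊗F_ε) ρ (F_ε⊗F_ε)† has trace x₃ + ε²(x₂ + x₁ε²), and the normalized filtered state has correlation-matrix singular values 2|x₄|ε² / (x₃ + ε²(x₂ + x₁ε²)) (with multiplicity two) and |x₃ + ε²(−x₂ + x₁ε²)| / (x₃ + ε²(x₂ + x₁ε²)). -/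
noncomputable section
open Matrix Kronecker

/-- `ketbra a b c d = |ab⟩⟨cd|` in the computational product basis. -/
def ketbra (a b c d : Fin 2) : Matrix (Fin 2 × Fin 2) (Fin 2 × Fin 2) ℂ :=
  Matrix.single a c 1 ⊗ₖ Matrix.single b d 1

/-- The X-state χ(x₁,x₂,x₃,x₄). -/
def chi (x1 x2 x3 x4 : ℝ) : Matrix (Fin 2 × Fin 2) (Fin 2 × Fin 2) ℂ :=
  (x1 : ℂ) • ketbra 0 0 0 0 + (x2 : ℂ) • ketbra 0 1 0 1 + (x3 : ℂ) • ketbra 1 1 1 1 +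
    (x4 : ℂ) • (ketbra 0 0 1 1 + ketbra 1 1 0 0)

/-- The local filter F_ε = ε|0⟩⟨0| + |1⟩⟨1| on a qubit. -/
def filt (ε : ℝ) : Matrix (Fin 2) (Fin 2) ℂ :=
  (ε : ℂ) • Matrix.single 0 0 1 + Matrix.single 1 1 1

/-! Both filters are diagonal, so conjugation by `F_ε ⊗ F_ε` multiplies the matrix unit `|ab⟩⟨cd|`
by the weights of its row and column: the filtered X-state is again an X-state,
`χ(x₁ε⁴, x₂ε², x₃, x₄ε²)`. The correlation matrix of `χ(y₁, y₂, y₃, y₄)` is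
`diag(2y₄, -2y₄, y₁ - y₂ + y₃)`, so for the normalized state `Wᵀ W` is diagonal and the
characteristic polynomial factors over the squares of its diagonal entries. -/

namespace Matrix

variable {n R : Type*} [Fintype n] [DecidableEq n]

theorem diagonal_mul_single_mul_diagonal [NonUnitalNonAssocSemiring R] (d e : n → R)
    (i j : n) (a : R) :
    diagonal d * single i j a * diagonal e = single i j (d i * a * e j) := by
  ext k l
  simp only [mul_diagonal, diagonal_mul, single_apply]
  split_ifs with h
  · rw [← h.1, ← h.2]
  · simp

theorem det_smul_one_sub_transpose_diagonal_mul_diagonal [CommRing R] (t : R) (d : n → R) :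
    (t • (1 : Matrix n n R) - (diagonal d)ᵀ * diagonal d).det = ∏ i, (t - d i ^ 2) := by
  rw [diagonal_transpose, diagonal_mul_diagonal, smul_one_eq_diagonal, diagonal_sub, det_diagonal]
  simp only [sq]

end Matrix

open Matrix

theorem ketbra_eq_single (a b c d : Fin 2) : ketbra a b c d = single (a, b) (c, d) 1 := by
  rw [ketbra, single_kronecker_single, mul_one]

theorem filt_eq_diagonal (ε : ℝ) : filt ε = diagonal ![(ε : ℂ), 1] := by
  ext i j
  fin_cases i <;> fin_cases j <;> simp [filt]

theorem conjTranspose_filt (ε : ℝ) : (filt ε)ᴴ = filt ε := by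
  simp only [filt_eq_diagonal, diagonal_conjTranspose]
  congr 1
  ext i
  fin_cases i <;> simp

theorem filt_kronecker_filt_eq_diagonal (ε : ℝ) :
    filt ε ⊗ₖ filt ε = diagonal fun p => ![(ε : ℂ), 1] p.1 * ![(ε : ℂ), 1] p.2 := by
  rw [filt_eq_diagonal, diagonal_kronecker_diagonal]

theorem filt_sandwich_ketbra (ε : ℝ) (a b c d : Fin 2) :
    (filt ε ⊗ₖ filt ε) * ketbra a b c d * (filt ε ⊗ₖ filt ε)ᴴ =
      (![(ε : ℂ), 1] a * ![(ε : ℂ), 1] b * (![(ε : ℂ), 1] c * ![(ε : ℂ), 1] d)) •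
        ketbra a b c d := by
  rw [conjTranspose_kronecker, conjTranspose_filt, filt_kronecker_filt_eq_diagonal,
    ketbra_eq_single, diagonal_mul_single_mul_diagonal, smul_single, smul_eq_mul, mul_one, mul_one]

theorem filt_sandwich_chi (x1 x2 x3 x4 ε : ℝ) :
    (filt ε ⊗ₖ filt ε) * chi x1 x2 x3 x4 * (filt ε ⊗ₖ filt ε)ᴴ =
      chi (x1 * ε ^ 4) (x2 * ε ^ 2) x3 (x4 * ε ^ 2) := by
  simp only [chi, Matrix.add_mul, Matrix.mul_add, Matrix.smul_mul, Matrix.mul_smul,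
    filt_sandwich_ketbra]
  simp only [Fin.isValue, cons_val_zero, cons_val_one, smul_smul, smul_add]
  push_cast
  module

theorem trace_chi (x1 x2 x3 x4 : ℝ) : (chi x1 x2 x3 x4).trace = ((x1 + x2 + x3 : ℝ) : ℂ) := by
  simp [chi, ketbra_eq_single, trace_add, trace_single_eq_same, trace_single_eq_of_ne]

theorem trace_ketbra_mul_kronecker (a b c d : Fin 2) (A B : Matrix (Fin 2) (Fin 2) ℂ) :
    (ketbra a b c d * (A ⊗ₖ B)).trace = A c a * B d b := by
  rw [ketbra_eq_single, trace_single_mul, one_smul, kronecker_apply]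

theorem corr_chi (x1 x2 x3 x4 : ℝ) :
    corr (chi x1 x2 x3 x4) = diagonal ![2 * x4, -2 * x4, x1 - x2 + x3] := by
  ext j k
  simp only [corr, chi, of_apply, Matrix.add_mul, Matrix.smul_mul, trace_add, trace_smul,
    trace_ketbra_mul_kronecker, smul_eq_mul]
  fin_cases j <;> fin_cases k <;> simp [σp] <;> ring

theorem corr_ofReal_smul (r : ℝ) (ρ : Matrix (Fin 2 × Fin 2) (Fin 2 × Fin 2) ℂ) :
    corr ((r : ℂ) • ρ) = r • corr ρ := by
  ext j k
  simp [corr, trace_smul]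

theorem filtered_X_state_general (x1 x2 x3 x4 ε : ℝ)
    (ρ' : Matrix (Fin 2 × Fin 2) (Fin 2 × Fin 2) ℂ)
    (hρ' : ρ' = (filt ε ⊗ₖ filt ε) * chi x1 x2 x3 x4 * (filt ε ⊗ₖ filt ε)ᴴ) :
    ρ'.trace = ((x3 + ε ^ 2 * (x2 + x1 * ε ^ 2) : ℝ) : ℂ) ∧
    (∀ t : ℝ,
      (t • (1 : Matrix (Fin 3) (Fin 3) ℝ) -
        (corr (((x3 + ε ^ 2 * (x2 + x1 * ε ^ 2) : ℝ) : ℂ)⁻¹ • ρ'))ᵀ *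
          corr (((x3 + ε ^ 2 * (x2 + x1 * ε ^ 2) : ℝ) : ℂ)⁻¹ • ρ')).det =
      (t - (2 * |x4| * ε ^ 2 / (x3 + ε ^ 2 * (x2 + x1 * ε ^ 2))) ^ 2) *
      (t - (2 * |x4| * ε ^ 2 / (x3 + ε ^ 2 * (x2 + x1 * ε ^ 2))) ^ 2) *
      (t - (|x3 + ε ^ 2 * (-x2 + x1 * ε ^ 2)| / (x3 + ε ^ 2 * (x2 + x1 * ε ^ 2))) ^ 2)) := by
  rw [filt_sandwich_chi] at hρ'
  subst hρ'
  refine ⟨by rw [trace_chi]; congr 1; ring, fun t => ?_⟩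
  rw [← Complex.ofReal_inv, corr_ofReal_smul, corr_chi, ← diagonal_smul,
    det_smul_one_sub_transpose_diagonal_mul_diagonal, Fin.prod_univ_three]
  simp only [Fin.isValue, Pi.smul_apply, cons_val_zero, cons_val_one, cons_val, smul_eq_mul,
    mul_pow, inv_pow, div_pow, sq_abs, neg_mul, mul_neg, even_two, Even.neg_pow]
  ring

/-- Filtering an X-state with F_ε on both qubits: the unnormalized filtered state has trace
x₃ + ε²(x₂ + x₁ε²), and the normalized filtered state has correlation-matrix singular values
2|x₄|ε²/c (twice) and |x₃ + ε²(−x₂ + x₁ε²)|/c, with c the above trace. -/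
theorem filtered_X_state (x1 x2 x3 x4 ε : ℝ)
    (hsum : x1 + x2 + x3 = 1) (h1 : 0 ≤ x1) (h2 : 0 ≤ x2) (h3 : 0 ≤ x3)
    (h4 : x4 ^ 2 ≤ x1 * x3) (hε : ε ∈ Set.Ioc (0 : ℝ) 1)
    (ρ' : Matrix (Fin 2 × Fin 2) (Fin 2 × Fin 2) ℂ)
    (hρ' : ρ' = (filt ε ⊗ₖ filt ε) * chi x1 x2 x3 x4 * (filt ε ⊗ₖ filt ε)ᴴ) :
    ρ'.trace = ((x3 + ε ^ 2 * (x2 + x1 * ε ^ 2) : ℝ) : ℂ) ∧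
    (∀ t : ℝ,
      (t • (1 : Matrix (Fin 3) (Fin 3) ℝ) -
        (corr (((x3 + ε ^ 2 * (x2 + x1 * ε ^ 2) : ℝ) : ℂ)⁻¹ • ρ'))ᵀ *
          corr (((x3 + ε ^ 2 * (x2 + x1 * ε ^ 2) : ℝ) : ℂ)⁻¹ • ρ')).det =
      (t - (2 * |x4| * ε ^ 2 / (x3 + ε ^ 2 * (x2 + x1 * ε ^ 2))) ^ 2) *
      (t - (2 * |x4| * ε ^ 2 / (x3 + ε ^ 2 * (x2 + x1 * ε ^ 2))) ^ 2) *
      (t - (|x3 + ε ^ 2 * (-x2 + x1 * ε ^ 2)| / (x3 + ε ^ 2 * (x2 + x1 * ε ^ 2))) ^ 2)) :=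
  filtered_X_state_general x1 x2 x3 x4 ε ρ' hρ'
end
end
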